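/- arXiv:2104.05381 — 3 statements merged into one kernel-verified Lean document; each statement's English description precedes it below -/
import Mathlib

section
/- Let φ be a Bernstein function. Then for all z with Re(z) > 0, |φ''(z)| ≤ 4 φ(Re(z)) / (Re(z))², and consequently |φ''(z)|/|φ(z)| ≤ 4/(Re(z))². -/
/-!
Differentiating twice under the integral sign gives `φ''(z) = -∫ y² e^{-zy} μ(dy)`, hence
`|φ''(z)| ≤ ∫ y² e^{-xy} μ(dy)` with `x = Re z`. The elementary inequality
`t² e^{-t} ≤ 4 (1 - e^{-t})` for `t = xy` bounds this by `(4 / x²) ∫ (1 - e^{-xy}) μ(dy)`,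
which is at most `4 φ(x) / x²` since `q, d ≥ 0`. Finally `Re (1 - e^{-zy}) ≥ 1 - e^{-xy}`
gives `φ(x) ≤ Re φ(z) ≤ |φ(z)|`, which yields the bound on `|φ''(z)| / |φ(z)|`.
-/

open MeasureTheory Set Filter Topology

lemma sq_mul_exp_neg_le {t : ℝ} (ht : 0 ≤ t) :
    t ^ 2 * Real.exp (-t) ≤ 4 * (1 - Real.exp (-t)) := by
  have hquad : 1 + t + t ^ 2 / 2 ≤ Real.exp t := Real.quadratic_le_exp_of_nonneg ht
  have hinv : Real.exp (-t) * Real.exp t = 1 := by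
    rw [← Real.exp_add, neg_add_cancel, Real.exp_zero]
  nlinarith [mul_le_mul_of_nonneg_left hquad (Real.exp_pos (-t)).le]

lemma pow_mul_exp_neg_le_mul_min {k : ℕ} (hk : k ≠ 0) {a y : ℝ} (ha : 0 < a) (hy : 0 ≤ y) :
    y ^ k * Real.exp (-(a * y)) ≤ (1 + k.factorial / a ^ k) * min y 1 := by
  have hexp : Real.exp (-(a * y)) ≤ 1 := Real.exp_le_one_iff.2 (by nlinarith)
  have hC : 0 ≤ (k.factorial : ℝ) / a ^ k := by positivity
  rcases le_total y 1 with hy1 | hy1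
  · rw [min_eq_left hy1]
    calc y ^ k * Real.exp (-(a * y)) ≤ y := by
          nlinarith [pow_le_of_le_one hy hy1 hk, pow_nonneg hy k]
      _ ≤ (1 + k.factorial / a ^ k) * y := by nlinarith
  · rw [min_eq_right hy1, mul_one]
    have hfac : (a * y) ^ k / k.factorial ≤ Real.exp (a * y) :=
      Real.pow_div_factorial_le_exp _ (by positivity) k
    have : y ^ k * Real.exp (-(a * y)) ≤ k.factorial / a ^ k := by
      rw [Real.exp_neg, ← div_eq_mul_inv, div_le_div_iff₀ (Real.exp_pos _) (by positivity)]
      rw [div_le_iff₀ (by positivity), mul_pow] at hfac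
      linarith
    linarith

lemma norm_one_sub_exp_neg_le {u : ℂ} (hu : 0 ≤ u.re) :
    ‖1 - Complex.exp (-u)‖ ≤ 2 * min ‖u‖ 1 := by
  have hle_two : ‖1 - Complex.exp (-u)‖ ≤ 2 := by
    calc ‖1 - Complex.exp (-u)‖ ≤ ‖(1 : ℂ)‖ + ‖Complex.exp (-u)‖ := norm_sub_le _ _
      _ ≤ 2 := by
        rw [norm_one, Complex.norm_exp, Complex.neg_re]
        linarith [Real.exp_le_one_iff.2 (neg_nonpos.2 hu)]
  rcases le_total ‖u‖ 1 with h | h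
  · rw [min_eq_left h, norm_sub_rev, ← norm_neg u]
    exact Complex.norm_exp_sub_one_le (by rwa [norm_neg])
  · rwa [min_eq_right h, mul_one]

lemma norm_ofReal_pow_mul_exp_neg {y : ℝ} (hy : 0 ≤ y) (k : ℕ) (w : ℂ) :
    ‖(y : ℂ) ^ k * Complex.exp (-(w * y))‖ = y ^ k * Real.exp (-(w.re * y)) := by
  simp [Complex.norm_exp, Complex.mul_re, abs_of_nonneg hy]

lemma re_one_sub_exp_neg_ofReal_mul (x y : ℝ) :
    (1 - Complex.exp (-(x * y))).re = 1 - Real.exp (-(x * y)) := by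
  rw [← Complex.ofReal_mul, ← Complex.ofReal_neg, Complex.sub_re, Complex.one_re,
    Complex.exp_ofReal_re]

lemma re_exp_neg_mul_le (z : ℂ) (y : ℝ) :
    (Complex.exp (-(z * y))).re ≤ (Complex.exp (-(z.re * y))).re := by
  rw [← Complex.ofReal_mul, ← Complex.ofReal_neg, Complex.exp_ofReal_re]
  calc (Complex.exp (-(z * y))).re ≤ ‖Complex.exp (-(z * y))‖ := Complex.re_le_norm _
    _ = Real.exp (-(z.re * y)) := by simp [Complex.norm_exp]

def IsLevyMeasure (μ : Measure ℝ) : Prop :=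
  ∫⁻ y in Ioi (0:ℝ), ENNReal.ofReal (min y 1) ∂μ < ⊤

section LevyIntegrals

variable {μ : Measure ℝ}

lemma integrableOn_min_one (hμ : IsLevyMeasure μ) :
    IntegrableOn (fun y : ℝ => min y 1) (Ioi 0) μ :=
  ⟨(continuous_id.min continuous_const).aestronglyMeasurable,
    (hasFiniteIntegral_iff_ofReal (ae_restrict_of_forall_mem measurableSet_Ioi
      fun _ hy => le_min (le_of_lt hy) zero_le_one)).2 hμ⟩

lemma integrableOn_Ioi_of_norm_le_mul_min {E : Type*} [NormedAddCommGroup E]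
    (hμ : IsLevyMeasure μ) {f : ℝ → E} (hf : AEStronglyMeasurable f (μ.restrict (Ioi 0)))
    (C : ℝ)
    (hfC : ∀ y ∈ Ioi (0:ℝ), ‖f y‖ ≤ C * min y 1) :
    IntegrableOn f (Ioi 0) μ :=
  ((integrableOn_min_one hμ).const_mul C).mono' hf
    (ae_restrict_of_forall_mem measurableSet_Ioi hfC)

lemma norm_pow_mul_exp_neg_le {k : ℕ} (hk : k ≠ 0) {a y : ℝ} {w : ℂ} (ha : 0 < a)
    (haw : a ≤ w.re) (hy : 0 ≤ y) :
    ‖(y : ℂ) ^ k * Complex.exp (-(w * y))‖ ≤ (1 + k.factorial / a ^ k) * min y 1 := by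
  rw [norm_ofReal_pow_mul_exp_neg hy]
  refine le_trans ?_ (pow_mul_exp_neg_le_mul_min hk ha hy)
  gcongr

lemma integrableOn_one_sub_exp_neg (hμ : IsLevyMeasure μ) {z : ℂ} (hz : 0 ≤ z.re) :
    IntegrableOn (fun y : ℝ => 1 - Complex.exp (-(z * y))) (Ioi 0) μ := by
  refine integrableOn_Ioi_of_norm_le_mul_min hμ (by fun_prop) (2 * max ‖z‖ 1) fun y hy => ?_
  have hy : 0 ≤ y := le_of_lt hy
  calc ‖1 - Complex.exp (-(z * y))‖ ≤ 2 * min (‖z‖ * y) 1 := by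
        simpa [abs_of_nonneg hy] using
          norm_one_sub_exp_neg_le (u := z * y) (by simpa using mul_nonneg hz hy)
    _ ≤ 2 * max ‖z‖ 1 * min y 1 := by
        rw [mul_assoc]
        gcongr
        rcases le_total y 1 with h | h
        · rw [min_eq_left h]; exact min_le_of_left_le (by gcongr; exact le_max_left _ _)
        · rw [min_eq_right h, mul_one]; exact min_le_of_right_le (le_max_right _ _)

lemma integrableOn_pow_mul_exp_neg (hμ : IsLevyMeasure μ) {k : ℕ} (hk : k ≠ 0) {z : ℂ}
    (hz : 0 < z.re) :
    IntegrableOn (fun y : ℝ => (y : ℂ) ^ k * Complex.exp (-(z * y))) (Ioi 0) μ :=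
  integrableOn_Ioi_of_norm_le_mul_min hμ (by fun_prop) _
    fun y hy => norm_pow_mul_exp_neg_le hk hz le_rfl (le_of_lt hy)

lemma setOf_lt_re_mem_nhds {c : ℝ} {z : ℂ} (hz : c < z.re) : {w : ℂ | c < w.re} ∈ 𝓝 z :=
  (isOpen_lt continuous_const Complex.continuous_re).mem_nhds hz

lemma hasDerivAt_exp_neg_mul (y : ℝ) (w : ℂ) :
    HasDerivAt (fun w : ℂ => Complex.exp (-(w * y))) (-(y * Complex.exp (-(w * y)))) w := by
  have hlin : HasDerivAt (fun w : ℂ => -(w * y)) (-y) w := by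
    simpa [Pi.neg_def] using (hasDerivAt_mul_const (y : ℂ) (x := w)).neg
  simpa [mul_comm] using hlin.cexp

lemma hasDerivAt_integral_one_sub_exp_neg (hμ : IsLevyMeasure μ) {z : ℂ}
    (hz : 0 < z.re) :
    HasDerivAt (fun w : ℂ => ∫ y in Ioi (0:ℝ), (1 - Complex.exp (-(w * y))) ∂μ)
      (∫ y in Ioi (0:ℝ), (y : ℂ) * Complex.exp (-(z * y)) ∂μ) z := by
  refine (hasDerivAt_integral_of_dominated_loc_of_deriv_le
    (F := fun w (y : ℝ) => 1 - Complex.exp (-(w * y)))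
    (F' := fun w (y : ℝ) => (y : ℂ) * Complex.exp (-(w * y)))
    (setOf_lt_re_mem_nhds (half_lt_self hz))
    (.of_forall fun w => by fun_prop) (integrableOn_one_sub_exp_neg hμ hz.le)
    (by fun_prop) ?_ ((integrableOn_min_one hμ).const_mul (1 + 1 / (z.re / 2)))
    (.of_forall fun y w _ => ?_)).2
  · refine ae_restrict_of_forall_mem measurableSet_Ioi fun y hy w hw => ?_
    simpa using norm_pow_mul_exp_neg_le one_ne_zero (half_pos hz) (le_of_lt hw) (le_of_lt hy)
  · simpa using (hasDerivAt_exp_neg_mul y w).const_sub 1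

lemma hasDerivAt_integral_pow_mul_exp_neg (hμ : IsLevyMeasure μ) {k : ℕ} (hk : k ≠ 0)
    {z : ℂ} (hz : 0 < z.re) :
    HasDerivAt (fun w : ℂ => ∫ y in Ioi (0:ℝ), (y : ℂ) ^ k * Complex.exp (-(w * y)) ∂μ)
      (-∫ y in Ioi (0:ℝ), (y : ℂ) ^ (k + 1) * Complex.exp (-(z * y)) ∂μ) z := by
  rw [← integral_neg]
  refine (hasDerivAt_integral_of_dominated_loc_of_deriv_le
    (F := fun w (y : ℝ) => (y : ℂ) ^ k * Complex.exp (-(w * y)))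
    (F' := fun w (y : ℝ) => -((y : ℂ) ^ (k + 1) * Complex.exp (-(w * y))))
    (setOf_lt_re_mem_nhds (half_lt_self hz))
    (.of_forall fun w => by fun_prop) (integrableOn_pow_mul_exp_neg hμ hk hz)
    (by fun_prop) ?_
    ((integrableOn_min_one hμ).const_mul (1 + (k + 1).factorial / (z.re / 2) ^ (k + 1)))
    (.of_forall fun y w _ => ?_)).2
  · refine ae_restrict_of_forall_mem measurableSet_Ioi fun y hy w hw => ?_
    rw [norm_neg]
    exact norm_pow_mul_exp_neg_le k.succ_ne_zero (half_pos hz) (le_of_lt hw) (le_of_lt hy)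
  · exact ((hasDerivAt_exp_neg_mul y w).const_mul ((y : ℂ) ^ k)).congr_deriv (by ring)

end LevyIntegrals

noncomputable def bernsteinFun (q d : ℝ) (μ : Measure ℝ) (z : ℂ) : ℂ :=
  (q : ℂ) + (d : ℂ) * z + ∫ y in Ioi (0:ℝ), (1 - Complex.exp (-(z * (y : ℂ)))) ∂μ

section Bernstein

variable {q d : ℝ} {μ : Measure ℝ} {z : ℂ}

lemma hasDerivAt_bernsteinFun (hμ : IsLevyMeasure μ) (hz : 0 < z.re) :
    HasDerivAt (bernsteinFun q d μ)
      (d + ∫ y in Ioi (0:ℝ), (y : ℂ) * Complex.exp (-(z * y)) ∂μ) z := by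
  have hlin : HasDerivAt (fun w : ℂ => (q : ℂ) + d * w) d z := by
    simpa using ((hasDerivAt_id z).const_mul (d : ℂ)).const_add (q : ℂ)
  exact hlin.add (hasDerivAt_integral_one_sub_exp_neg hμ hz)

lemma iteratedDeriv_two_bernsteinFun (hμ : IsLevyMeasure μ) (hz : 0 < z.re) :
    iteratedDeriv 2 (bernsteinFun q d μ) z
      = -∫ y in Ioi (0:ℝ), (y : ℂ) ^ 2 * Complex.exp (-(z * y)) ∂μ := by
  have hderiv : deriv (bernsteinFun q d μ) =ᶠ[𝓝 z]
      fun w => d + ∫ y in Ioi (0:ℝ), (y : ℂ) ^ 1 * Complex.exp (-(w * y)) ∂μ :=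
    eventually_of_mem (setOf_lt_re_mem_nhds hz)
      fun w hw => by simpa using (hasDerivAt_bernsteinFun hμ hw).deriv
  rw [iteratedDeriv_succ, iteratedDeriv_one, hderiv.deriv_eq]
  exact ((hasDerivAt_integral_pow_mul_exp_neg hμ one_ne_zero hz).const_add _).deriv

lemma re_bernsteinFun (hμ : IsLevyMeasure μ) (hz : 0 ≤ z.re) :
    (bernsteinFun q d μ z).re
      = q + d * z.re + ∫ y in Ioi (0:ℝ), (1 - Complex.exp (-(z * y))).re ∂μ := by
  simp only [bernsteinFun, Complex.add_re, Complex.ofReal_re, Complex.re_ofReal_mul]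
  exact congrArg _ (integral_re (integrableOn_one_sub_exp_neg hμ hz)).symm

lemma re_bernsteinFun_ofReal_re_le (hμ : IsLevyMeasure μ) (hz : 0 ≤ z.re) :
    (bernsteinFun q d μ z.re).re ≤ (bernsteinFun q d μ z).re := by
  rw [re_bernsteinFun hμ (by simpa), re_bernsteinFun hμ hz, Complex.ofReal_re]
  refine add_le_add le_rfl ?_
  refine setIntegral_mono_on (integrableOn_one_sub_exp_neg hμ (by simpa)).re
    (integrableOn_one_sub_exp_neg hμ hz).re measurableSet_Ioi fun y _ => ?_
  simp only [Complex.sub_re, Complex.one_re]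
  linarith [re_exp_neg_mul_le z y]

lemma norm_iteratedDeriv_two_bernsteinFun_le (hq : 0 ≤ q) (hd : 0 ≤ d)
    (hμ : IsLevyMeasure μ) (hz : 0 < z.re) :
    ‖iteratedDeriv 2 (bernsteinFun q d μ) z‖
      ≤ 4 * (bernsteinFun q d μ z.re).re / z.re ^ 2 := by
  set x := z.re
  have hpoint : ∀ y ∈ Ioi (0:ℝ), ‖(y : ℂ) ^ 2 * Complex.exp (-(z * y))‖
      ≤ 4 / x ^ 2 * (1 - Complex.exp (-(x * y))).re := fun y hy => by
    rw [norm_ofReal_pow_mul_exp_neg (le_of_lt hy), re_one_sub_exp_neg_ofReal_mul]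
    have hxy := sq_mul_exp_neg_le (mul_nonneg hz.le (le_of_lt hy))
    calc y ^ 2 * Real.exp (-(x * y)) = (x * y) ^ 2 * Real.exp (-(x * y)) / x ^ 2 := by
          field_simp
      _ ≤ 4 * (1 - Real.exp (-(x * y))) / x ^ 2 := by gcongr
      _ = _ := by ring
  rw [iteratedDeriv_two_bernsteinFun hμ hz, norm_neg]
  calc ‖∫ y in Ioi (0:ℝ), (y : ℂ) ^ 2 * Complex.exp (-(z * y)) ∂μ‖
      ≤ ∫ y in Ioi (0:ℝ), ‖(y : ℂ) ^ 2 * Complex.exp (-(z * y))‖ ∂μ :=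
        norm_integral_le_integral_norm _
    _ ≤ ∫ y in Ioi (0:ℝ), 4 / x ^ 2 * (1 - Complex.exp (-(x * y))).re ∂μ :=
        setIntegral_mono_on (integrableOn_pow_mul_exp_neg hμ two_ne_zero hz).norm
          ((integrableOn_one_sub_exp_neg hμ (by simpa using hz.le)).re.const_mul _)
          measurableSet_Ioi hpoint
    _ = 4 / x ^ 2 * ∫ y in Ioi (0:ℝ), (1 - Complex.exp (-(x * y))).re ∂μ :=
        integral_const_mul _ _
    _ ≤ 4 / x ^ 2 * (bernsteinFun q d μ x).re := by
        rw [re_bernsteinFun hμ (by simpa using hz.le), Complex.ofReal_re]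
        gcongr
        nlinarith
    _ = 4 * (bernsteinFun q d μ x).re / x ^ 2 := by ring

end Bernstein

theorem bernstein_second_deriv_bound_general
    (q d : ℝ) (hq : 0 ≤ q) (hd : 0 ≤ d)
    (μ : Measure ℝ)
    (hμ : ∫⁻ y in Set.Ioi (0:ℝ), ENNReal.ofReal (min y 1) ∂μ < ⊤)
    (φ : ℂ → ℂ)
    (hφ : ∀ z : ℂ, 0 < z.re →
      φ z = (q : ℂ) + (d : ℂ) * z
        + ∫ y in Set.Ioi (0:ℝ), (1 - Complex.exp (-(z * (y : ℂ)))) ∂μ) :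
    ∀ z : ℂ, 0 < z.re →
      ‖iteratedDeriv 2 φ z‖ ≤ 4 * (φ ((z.re : ℂ))).re / z.re ^ 2
      ∧ ‖iteratedDeriv 2 φ z‖ / ‖φ z‖ ≤ 4 / z.re ^ 2 := by
  intro z hz
  have hφB : ∀ w : ℂ, 0 < w.re → φ w = bernsteinFun q d μ w := hφ
  have hφz : φ =ᶠ[𝓝 z] bernsteinFun q d μ :=
    eventually_of_mem (setOf_lt_re_mem_nhds hz) hφB
  have hbound := norm_iteratedDeriv_two_bernsteinFun_le hq hd hμ hz
  rw [hφz.iteratedDeriv_eq, hφB z hz, hφB z.re (by simpa using hz)]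
  refine ⟨hbound, div_le_of_le_mul₀ (norm_nonneg _) (by positivity) ?_⟩
  calc ‖iteratedDeriv 2 (bernsteinFun q d μ) z‖
      ≤ 4 * (bernsteinFun q d μ z.re).re / z.re ^ 2 := hbound
    _ ≤ 4 * ‖bernsteinFun q d μ z‖ / z.re ^ 2 := by
        gcongr
        exact (re_bernsteinFun_ofReal_re_le hμ hz.le).trans (Complex.re_le_norm _)
    _ = 4 / z.re ^ 2 * ‖bernsteinFun q d μ z‖ := by ring

theorem bernstein_second_deriv_bound
    (q d : ℝ) (hq : 0 ≤ q) (hd : 0 ≤ d)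
    (μ : Measure ℝ)
    (hμ : ∫⁻ y in Set.Ioi (0:ℝ), ENNReal.ofReal (min y 1) ∂μ < ⊤)
    (hnz : 0 < q ∨ 0 < d ∨ 0 < μ (Set.Ioi (0:ℝ)))
    (φ : ℂ → ℂ)
    (hφ : ∀ z : ℂ, 0 < z.re →
      φ z = (q : ℂ) + (d : ℂ) * z
        + ∫ y in Set.Ioi (0:ℝ), (1 - Complex.exp (-(z * (y : ℂ)))) ∂μ)
    (hint : ∀ z : ℂ, 0 < z.re →
      IntegrableOn (fun y : ℝ => 1 - Complex.exp (-(z * (y : ℂ)))) (Set.Ioi 0) μ) :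
    ∀ z : ℂ, 0 < z.re →
      ‖iteratedDeriv 2 φ z‖ ≤ 4 * (φ ((z.re : ℂ))).re / z.re ^ 2
      ∧ ‖iteratedDeriv 2 φ z‖ / ‖φ z‖ ≤ 4 / z.re ^ 2 :=
  bernstein_second_deriv_bound_general q d hq hd μ hμ φ hφ
end

section
/- Let φ be a Bernstein function. Then for every x > 0 and every real b, |φ(x + ib) − φ(x)| ≤ (|b|/x) φ(x). -/
/-!
Split `φ` into its affine part `q + d z` and its Lévy part `∫ (1 - e^{-zy}) μ(dy)` and bound
each increment by `|b|/x` times the real part of that piece at `x`. For the affine part this is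
`d|b| ≤ (|b|/x)(q + dx)`. For the Lévy part it holds pointwise in `y`:
`|e^{-(x+ib)y} - e^{-xy}| = e^{-xy} |e^{-iby} - 1| ≤ |b| y e^{-xy} ≤ (|b|/x)(1 - e^{-xy})`,
the last step being `(1 + t) e^{-t} ≤ 1`.
-/

open MeasureTheory Set Filter Complex

lemma mul_exp_neg_le_one_sub_exp_neg (t : ℝ) :
    t * Real.exp (-t) ≤ 1 - Real.exp (-t) := by
  have h : (t + 1) * Real.exp (-t) ≤ 1 := by
    calc (t + 1) * Real.exp (-t) ≤ Real.exp t * Real.exp (-t) := by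
          gcongr; exact Real.add_one_le_exp t
      _ = 1 := by rw [← Real.exp_add, add_neg_cancel, Real.exp_zero]
  linarith

lemma norm_one_sub_exp_vertical_sub_le {x y : ℝ} (b : ℝ) (hx : 0 < x) (hy : 0 ≤ y) :
    ‖(1 - exp (-(((x : ℂ) + b * I) * y))) - (1 - exp (-((x : ℂ) * y)))‖
      ≤ |b| / x * (1 - exp (-((x : ℂ) * y))).re := by
  have hsplit : -(((x : ℂ) + b * I) * y) = ↑(-(x * y)) + I * ↑(-(b * y)) := by
    push_cast; ring
  have hreal : -((x : ℂ) * y) = ↑(-(x * y)) := by push_cast; ring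
  have hdiff : (1 - exp (-(((x : ℂ) + b * I) * y))) - (1 - exp (-((x : ℂ) * y)))
      = -(exp ↑(-(x * y)) * (exp (I * ↑(-(b * y))) - 1)) := by
    rw [hsplit, hreal, exp_add]; ring
  rw [hdiff, norm_neg, norm_mul, norm_exp_ofReal, hreal, ← ofReal_exp, ← ofReal_one,
    ← ofReal_sub, ofReal_re]
  calc Real.exp (-(x * y)) * ‖exp (I * ↑(-(b * y))) - 1‖
      ≤ Real.exp (-(x * y)) * (|b| * y) := by
        gcongr
        simpa [abs_mul, abs_of_nonneg hy] using
          Real.norm_exp_I_mul_ofReal_sub_one_le (x := -(b * y))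
    _ = |b| / x * (x * y * Real.exp (-(x * y))) := by field_simp
    _ ≤ |b| / x * (1 - Real.exp (-(x * y))) := by
        gcongr; exact mul_exp_neg_le_one_sub_exp_neg _

lemma norm_affine_vertical_sub_le {q d x : ℝ} (b : ℝ) (hq : 0 ≤ q) (hd : 0 ≤ d) (hx : 0 < x) :
    ‖((q : ℂ) + d * ((x : ℂ) + b * I)) - (q + d * x)‖ ≤ |b| / x * ((q : ℂ) + d * x).re := by
  have hnorm : ‖((q : ℂ) + d * ((x : ℂ) + b * I)) - (q + d * x)‖ = d * |b| := by
    rw [show ((q : ℂ) + d * ((x : ℂ) + b * I)) - (q + d * x) = ↑(d * b) * I by push_cast; ring,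
      norm_mul, norm_I, mul_one, norm_real, Real.norm_eq_abs, abs_mul, abs_of_nonneg hd]
  have hre : ((q : ℂ) + d * x).re = q + d * x := by simp
  have hlin : |b| / x * (d * x) = d * |b| := by field_simp
  rw [hnorm, hre, mul_add, hlin]
  have : 0 ≤ |b| / x * q := by positivity
  linarith

lemma norm_integral_sub_le_mul_re_integral {α : Type*} [MeasurableSpace α] {μ : Measure α}
    {f g : α → ℂ} (hf : Integrable f μ) (hg : Integrable g μ) (c : ℝ)
    (h : ∀ᵐ a ∂μ, ‖f a - g a‖ ≤ c * (g a).re) :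
    ‖∫ a, f a ∂μ - ∫ a, g a ∂μ‖ ≤ c * (∫ a, g a ∂μ).re := by
  rw [← integral_sub hf hg, ← reCLM_apply, ← reCLM.integral_comp_comm hg, ← integral_const_mul]
  exact norm_integral_le_of_norm_le (hg.re.const_mul c) h

theorem bernstein_vertical_increment_bound_general
    (q d : ℝ) (hq : 0 ≤ q) (hd : 0 ≤ d)
    (μ : Measure ℝ)
    (φ : ℂ → ℂ)
    (hφ : ∀ z : ℂ, 0 < z.re →
      φ z = (q : ℂ) + (d : ℂ) * z
        + ∫ y in Set.Ioi (0:ℝ), (1 - Complex.exp (-(z * (y : ℂ)))) ∂μ)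
    (hint : ∀ z : ℂ, 0 < z.re →
      IntegrableOn (fun y : ℝ => 1 - Complex.exp (-(z * (y : ℂ)))) (Set.Ioi 0) μ) :
    ∀ x : ℝ, 0 < x → ∀ b : ℝ,
      ‖φ ((x : ℂ) + (b : ℂ) * Complex.I) - φ (x : ℂ)‖
        ≤ (|b| / x) * (φ (x : ℂ)).re := by
  intro x hx b
  have hzre : 0 < ((x : ℂ) + b * I).re := by simpa using hx
  have hxre : 0 < (x : ℂ).re := by simpa using hx
  have hlevy := norm_integral_sub_le_mul_re_integral (hint _ hzre) (hint _ hxre) (|b| / x)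
    (ae_restrict_of_forall_mem measurableSet_Ioi fun y hy ↦
      norm_one_sub_exp_vertical_sub_le b hx (le_of_lt hy))
  rw [hφ _ hzre, hφ _ hxre, add_sub_add_comm, Complex.add_re, mul_add (|b| / x)]
  exact (norm_add_le _ _).trans (add_le_add (norm_affine_vertical_sub_le b hq hd hx) hlevy)

theorem bernstein_vertical_increment_bound
    (q d : ℝ) (hq : 0 ≤ q) (hd : 0 ≤ d)
    (μ : Measure ℝ)
    (hμ : ∫⁻ y in Set.Ioi (0:ℝ), ENNReal.ofReal (min y 1) ∂μ < ⊤)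
    (φ : ℂ → ℂ)
    (hφ : ∀ z : ℂ, 0 < z.re →
      φ z = (q : ℂ) + (d : ℂ) * z
        + ∫ y in Set.Ioi (0:ℝ), (1 - Complex.exp (-(z * (y : ℂ)))) ∂μ)
    (hint : ∀ z : ℂ, 0 < z.re →
      IntegrableOn (fun y : ℝ => 1 - Complex.exp (-(z * (y : ℂ)))) (Set.Ioi 0) μ) :
    ∀ x : ℝ, 0 < x → ∀ b : ℝ,
      ‖φ ((x : ℂ) + (b : ℂ) * Complex.I) - φ (x : ℂ)‖
        ≤ (|b| / x) * (φ (x : ℂ)).re :=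
  bernstein_vertical_increment_bound_general q d hq hd μ φ hφ hint
end

section
/- Let φ be the Laplace exponent of a driftless subordinator. Then limsup_{λ→∞} φ(2λ)/φ(λ) < 2 if and only if limsup_{λ→∞} λφ'(λ)/φ(λ) < 1. -/
/-!
By the mean value theorem `φ(2λ) - φ(λ) = λ φ'(ξ)` for some `ξ ∈ (λ, 2λ)`, and `φ'` is
non-increasing, being the Laplace transform of `y μ(dy)`. Hence
`λ φ'(2λ) ≤ φ(2λ) - φ(λ) ≤ λ φ'(λ)`. The right inequality turns `λ φ'(λ) ≤ c φ(λ)` into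
`φ(2λ) ≤ (1 + c) φ(λ)`; the left one turns `φ(2λ) ≤ c φ(λ)` into
`2λ φ'(2λ) ≤ 2 (1 - 1/c) φ(2λ)`, and `2 (1 - 1/c) < 1` exactly when `c < 2`.
-/

open MeasureTheory Set Filter

theorem limsup_lt_iff_exists_eventually_le {α β : Type*} [ConditionallyCompleteLinearOrder β]
    [DenselyOrdered β] {F : Filter α} [F.NeBot] {u : α → β} {a a' b : β}
    (hlo : ∀ᶠ x in F, a ≤ u x) (hhi : ∀ᶠ x in F, u x ≤ a') :
    limsup u F < b ↔ ∃ c < b, ∀ᶠ x in F, u x ≤ c := by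
  constructor
  · intro h
    obtain ⟨c, hlc, hcb⟩ := exists_between h
    exact ⟨c, hcb, (eventually_lt_of_limsup_lt hlc (isBoundedUnder_of_eventually_le hhi)).mono
      fun _ => le_of_lt⟩
  · rintro ⟨c, hcb, hc⟩
    exact (limsup_le_of_le (isCoboundedUnder_le_of_eventually_le F hlo) hc).trans_lt hcb

section AntitoneDeriv

variable {f : ℝ → ℝ} {l c : ℝ}

theorem exists_sub_eq_mul_deriv (hf : DifferentiableOn ℝ f (Ioi 0)) (hl : 0 < l) :
    ∃ ξ ∈ Ioo l (2 * l), f (2 * l) - f l = l * deriv f ξ := by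
  have hsub : Icc l (2 * l) ⊆ Ioi 0 := fun x hx => hl.trans_le hx.1
  obtain ⟨ξ, hξ, h⟩ := exists_deriv_eq_slope f (by linarith : l < 2 * l)
    (hf.continuousOn.mono hsub) (hf.mono (Ioo_subset_Icc_self.trans hsub))
  refine ⟨ξ, hξ, ?_⟩
  rw [h]
  field_simp
  ring

theorem mul_deriv_two_mul_le_sub (hf : DifferentiableOn ℝ f (Ioi 0))
    (hf' : AntitoneOn (deriv f) (Ioi 0)) (hl : 0 < l) :
    l * deriv f (2 * l) ≤ f (2 * l) - f l := by
  obtain ⟨ξ, hξ, h⟩ := exists_sub_eq_mul_deriv hf hl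
  rw [h]
  exact mul_le_mul_of_nonneg_left
    (hf' (hl.trans hξ.1) (show (0 : ℝ) < 2 * l by linarith) hξ.2.le) hl.le

theorem sub_le_mul_deriv (hf : DifferentiableOn ℝ f (Ioi 0))
    (hf' : AntitoneOn (deriv f) (Ioi 0)) (hl : 0 < l) :
    f (2 * l) - f l ≤ l * deriv f l := by
  obtain ⟨ξ, hξ, h⟩ := exists_sub_eq_mul_deriv hf hl
  rw [h]
  exact mul_le_mul_of_nonneg_left (hf' hl (hl.trans hξ.1) hξ.1.le) hl.le

theorem mul_deriv_div_le_two (hpos : ∀ l : ℝ, 0 < l → 0 < f l)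
    (hf : DifferentiableOn ℝ f (Ioi 0)) (hf' : AntitoneOn (deriv f) (Ioi 0)) (hl : 0 < l) :
    l * deriv f l / f l ≤ 2 := by
  have h := mul_deriv_two_mul_le_sub hf hf' (half_pos hl)
  rw [mul_div_cancel₀ l two_ne_zero] at h
  rw [div_le_iff₀ (hpos l hl)]
  linarith [hpos (l / 2) (half_pos hl)]

theorem doubling_div_le_three (hpos : ∀ l : ℝ, 0 < l → 0 < f l)
    (hf : DifferentiableOn ℝ f (Ioi 0)) (hf' : AntitoneOn (deriv f) (Ioi 0)) (hl : 0 < l) :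
    f (2 * l) / f l ≤ 3 := by
  have h := mul_deriv_div_le_two hpos hf hf' hl
  rw [div_le_iff₀ (hpos l hl)] at h ⊢
  linarith [sub_le_mul_deriv hf hf' hl]

theorem mul_deriv_div_le_of_doubling_div_le (hpos : ∀ l : ℝ, 0 < l → 0 < f l)
    (hf : DifferentiableOn ℝ f (Ioi 0)) (hf' : AntitoneOn (deriv f) (Ioi 0)) (hl : 0 < l)
    (hc : 0 < c) (h : f (2 * l) / f l ≤ c) :
    2 * l * deriv f (2 * l) / f (2 * l) ≤ 2 * (c - 1) / c := by
  have h2l : 0 < 2 * l := by linarith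
  rw [div_le_iff₀ (hpos l hl)] at h
  rw [div_le_div_iff₀ (hpos (2 * l) h2l) hc]
  nlinarith [mul_le_mul_of_nonneg_left (mul_deriv_two_mul_le_sub hf hf' hl) hc.le]

theorem doubling_div_le_of_mul_deriv_div_le (hpos : ∀ l : ℝ, 0 < l → 0 < f l)
    (hf : DifferentiableOn ℝ f (Ioi 0)) (hf' : AntitoneOn (deriv f) (Ioi 0)) (hl : 0 < l)
    (h : l * deriv f l / f l ≤ c) :
    f (2 * l) / f l ≤ 1 + c := by
  rw [div_le_iff₀ (hpos l hl)] at h ⊢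
  linarith [sub_le_mul_deriv hf hf' hl]

theorem limsup_doubling_lt_two_iff (hpos : ∀ l : ℝ, 0 < l → 0 < f l)
    (hf : DifferentiableOn ℝ f (Ioi 0)) (hf' : AntitoneOn (deriv f) (Ioi 0))
    (hf'_nonneg : ∀ l : ℝ, 0 < l → 0 ≤ deriv f l) :
    limsup (fun l : ℝ => f (2 * l) / f l) atTop < 2
      ↔ limsup (fun l : ℝ => l * deriv f l / f l) atTop < 1 := by
  have hl_pos : ∀ᶠ l : ℝ in atTop, 0 < l := eventually_gt_atTop 0
  rw [limsup_lt_iff_exists_eventually_le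
      (hl_pos.mono fun l hl => div_nonneg (hpos _ (by linarith)).le (hpos l hl).le)
      (hl_pos.mono fun l hl => doubling_div_le_three hpos hf hf' hl),
    limsup_lt_iff_exists_eventually_le
      (hl_pos.mono fun l hl => div_nonneg (mul_nonneg hl.le (hf'_nonneg l hl)) (hpos l hl).le)
      (hl_pos.mono fun l hl => mul_deriv_div_le_two hpos hf hf' hl)]
  constructor
  · rintro ⟨c, hc2, hev⟩
    set c' := max c 1
    have hc' : 0 < c' := lt_max_of_lt_right one_pos
    refine ⟨2 * (c' - 1) / c', by rw [div_lt_one hc']; linarith [max_lt hc2 one_lt_two], ?_⟩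
    filter_upwards [(tendsto_id.atTop_div_const two_pos).eventually
      (hev.and hl_pos)] with l ⟨hle, hl⟩
    simpa only [id, mul_div_cancel₀ l two_ne_zero] using
      mul_deriv_div_le_of_doubling_div_le hpos hf hf' hl hc' (hle.trans (le_max_left c 1))
  · rintro ⟨c, hc1, hev⟩
    refine ⟨1 + c, by linarith, ?_⟩
    filter_upwards [hev, hl_pos] with l hle hl
    exact doubling_div_le_of_mul_deriv_div_le hpos hf hf' hl hle

end AntitoneDeriv

section LaplaceTransform

variable {μ : Measure ℝ} {l y : ℝ}

theorem mul_exp_neg_mul_le (hl : 0 < l) (hy : 0 ≤ y) :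
    y * Real.exp (-(l * y)) ≤ max 1 l⁻¹ * min y 1 := by
  rcases le_total y 1 with hy1 | hy1
  · have hexp_le_one : Real.exp (-(l * y)) ≤ 1 := Real.exp_le_one_iff.2 (by nlinarith)
    rw [min_eq_left hy1]
    nlinarith [le_max_left 1 l⁻¹]
  · have hle_inv : y * Real.exp (-(l * y)) ≤ l⁻¹ := by
      rw [inv_eq_one_div, le_div_iff₀ hl]
      calc y * Real.exp (-(l * y)) * l = l * y * Real.exp (-(l * y)) := by ring
        _ ≤ Real.exp (-1) := Real.mul_exp_neg_le_exp_neg_one _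
        _ ≤ 1 := Real.exp_le_one_iff.2 (by norm_num)
    rw [min_eq_right hy1, mul_one]
    exact hle_inv.trans (le_max_right _ _)

theorem integrableOn_mul_exp_neg_mul
    (hμ : ∫⁻ y in Ioi (0:ℝ), ENNReal.ofReal (min y 1) ∂μ < ⊤) (hl : 0 < l) :
    IntegrableOn (fun y => y * Real.exp (-(l * y))) (Ioi 0) μ := by
  have hmin : IntegrableOn (fun y => min y 1) (Ioi 0) μ := by
    refine ⟨(continuous_id.min continuous_const).aestronglyMeasurable, ?_⟩
    rw [hasFiniteIntegral_iff_ofReal]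
    · exact hμ
    · filter_upwards [ae_restrict_mem measurableSet_Ioi] with y hy
      exact le_min (le_of_lt hy) zero_le_one
  refine (hmin.const_mul (max 1 l⁻¹)).mono' (by fun_prop) ?_
  filter_upwards [ae_restrict_mem measurableSet_Ioi] with y (hy : 0 < y)
  rw [Real.norm_of_nonneg (by positivity)]
  exact mul_exp_neg_mul_le hl hy.le

theorem antitoneOn_setIntegral_mul_exp_neg_mul
    (hμ : ∫⁻ y in Ioi (0:ℝ), ENNReal.ofReal (min y 1) ∂μ < ⊤) :
    AntitoneOn (fun l => ∫ y in Ioi (0:ℝ), y * Real.exp (-(l * y)) ∂μ) (Ioi 0) := by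
  intro a ha b hb hab
  refine setIntegral_mono_on (integrableOn_mul_exp_neg_mul hμ hb)
    (integrableOn_mul_exp_neg_mul hμ ha) measurableSet_Ioi fun y hy => ?_
  have hy : (0 : ℝ) < y := hy
  gcongr

end LaplaceTransform

theorem doubling_iff_deriv_ratio_general
    (μ : Measure ℝ)
    (hμ : ∫⁻ y in Set.Ioi (0:ℝ), ENNReal.ofReal (min y 1) ∂μ < ⊤)
    (φ : ℝ → ℝ)
    (hpos : ∀ l : ℝ, 0 < l → 0 < φ l)
    (hderiv : ∀ l : ℝ, 0 < l →
      HasDerivAt φ (∫ y in Set.Ioi (0:ℝ), y * Real.exp (-(l * y)) ∂μ) l) :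
    Filter.limsup (fun l : ℝ => φ (2 * l) / φ l) atTop < 2
      ↔ Filter.limsup (fun l : ℝ => l * deriv φ l / φ l) atTop < 1 := by
  have hderiv_eq :
      EqOn (fun l => ∫ y in Ioi (0:ℝ), y * Real.exp (-(l * y)) ∂μ) (deriv φ) (Ioi 0) :=
    fun l hl => (hderiv l hl).deriv.symm
  refine limsup_doubling_lt_two_iff hpos
    (fun l hl => (hderiv l hl).differentiableAt.differentiableWithinAt)
    ((antitoneOn_setIntegral_mul_exp_neg_mul hμ).congr hderiv_eq) fun l hl => ?_
  rw [← hderiv_eq hl]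
  exact setIntegral_nonneg measurableSet_Ioi fun y hy =>
    mul_nonneg (le_of_lt hy) (Real.exp_pos _).le

theorem doubling_iff_deriv_ratio
    (q : ℝ) (hq : 0 ≤ q)
    (μ : Measure ℝ)
    (hμ : ∫⁻ y in Set.Ioi (0:ℝ), ENNReal.ofReal (min y 1) ∂μ < ⊤)
    (φ : ℝ → ℝ)
    (hφ : ∀ l : ℝ, 0 < l →
      φ l = q + ∫ y in Set.Ioi (0:ℝ), (1 - Real.exp (-(l * y))) ∂μ)
    (hint : ∀ l : ℝ, 0 < l →
      IntegrableOn (fun y => 1 - Real.exp (-(l * y))) (Set.Ioi 0) μ)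
    (hpos : ∀ l : ℝ, 0 < l → 0 < φ l)
    (hderiv : ∀ l : ℝ, 0 < l →
      HasDerivAt φ (∫ y in Set.Ioi (0:ℝ), y * Real.exp (-(l * y)) ∂μ) l) :
    Filter.limsup (fun l : ℝ => φ (2 * l) / φ l) atTop < 2
      ↔ Filter.limsup (fun l : ℝ => l * deriv φ l / φ l) atTop < 1 :=
  doubling_iff_deriv_ratio_general μ hμ φ hpos hderiv
end
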